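/- Let ρ₁ > 0, θ₁, θ₂ ∈ ℝ with α = θ₁ − θ₂, and suppose ρ₁ ≤ √(1 + cos α). Then the squared distance from the diagonal point P = (ρ₁ e^{iθ₁}, ρ₁ e^{iθ₂}) to Γ is dist(P, Γ)² = 2ρ₁² − 2ρ₁√(1 + cos α) + 1, and this distance is attained at the point of Γ with ρ = 1, i.e. at ((√2/2) e^{iθ*}, (√2/2) e^{iθ*}) for a suitable θ*. -/

import Mathlib

/-!
With `u = e^{iθ₁}`, `v = e^{iθ₂}`, the squared distance from `P` to the point `(ρ, θ)` of `Γ` is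
`2ρ₁² + (ρ² + ρ⁻²)/2 - √2 ρ₁ Re((ρu + ρ⁻¹v) e^{-iθ})`. For fixed `ρ` the real part is at most
`w = |ρu + ρ⁻¹v|`, with equality at `θ = arg (ρu + ρ⁻¹v)`, and `w² = ρ² + ρ⁻² + 2 cos α`.
So the squared distance is at least `w²/2 - √2 ρ₁ w + 2ρ₁² - cos α`, a function of `w` that
increases for `w ≥ √2 ρ₁`; since `w ≥ √(2 + 2 cos α) ≥ √2 ρ₁`, its minimum is at
`w = √(2 + 2 cos α)`, i.e. at `ρ = 1`.
-/

noncomputable section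

open Complex Metric
open scoped Real

/-- ℂ² with the Euclidean (ℝ⁴) distance. -/
abbrev C2 : Type := EuclideanSpace ℂ (Fin 2)

/-- The point (z, w) ∈ ℂ². -/
def pt (z w : ℂ) : C2 := (WithLp.equiv 2 (Fin 2 → ℂ)).symm ![z, w]

/-- The point of Γ with parameters (ρ, θ). -/
def gpt (ρ θ : ℝ) : C2 :=
  pt (((Real.sqrt 2 / 2 * ρ : ℝ) : ℂ) * Complex.exp ((θ : ℂ) * Complex.I))
     (((Real.sqrt 2 / 2 * ρ⁻¹ : ℝ) : ℂ) * Complex.exp ((θ : ℂ) * Complex.I))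

/-- The special Lagrangian surface Γ ⊂ ℂ². -/
def Gam : Set C2 := {p | ∃ ρ θ : ℝ, 0 < ρ ∧ p = gpt ρ θ}

/-- The point (ρ₁ e^{iθ₁}, ρ₂ e^{iθ₂}) ∈ ℂ². -/
def ppt (ρ₁ θ₁ ρ₂ θ₂ : ℝ) : C2 :=
  pt ((ρ₁ : ℂ) * Complex.exp ((θ₁ : ℂ) * Complex.I))
     ((ρ₂ : ℂ) * Complex.exp ((θ₂ : ℂ) * Complex.I))

lemma dist_pt_sq (z w z' w' : ℂ) :
    dist (pt z w) (pt z' w') ^ 2 = ‖z - z'‖ ^ 2 + ‖w - w'‖ ^ 2 := by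
  rw [EuclideanSpace.dist_eq, Real.sq_sqrt (by positivity)]
  simp [pt, Fin.sum_univ_two, Complex.dist_eq]

lemma norm_ofReal_mul_exp_add_sq (a b φ ψ : ℝ) :
    ‖(a : ℂ) * exp (φ * I) + b * exp (ψ * I)‖ ^ 2
      = a ^ 2 + b ^ 2 + 2 * a * b * Real.cos (φ - ψ) := by
  rw [Complex.sq_norm]
  simp only [exp_mul_I, normSq_apply, add_re, mul_re, ofReal_re, cos_ofReal_re, sin_ofReal_re,
    I_re, mul_zero, sin_ofReal_im, I_im, mul_one, sub_self, add_zero, ofReal_im, add_im,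
    cos_ofReal_im, mul_im, zero_add, zero_mul, sub_zero, Real.cos_sub]
  linear_combination a ^ 2 * Real.sin_sq_add_cos_sq φ + b ^ 2 * Real.sin_sq_add_cos_sq ψ

lemma norm_ofReal_mul_exp_sub_sq (a b φ ψ : ℝ) :
    ‖(a : ℂ) * exp (φ * I) - b * exp (ψ * I)‖ ^ 2
      = a ^ 2 + b ^ 2 - 2 * a * b * Real.cos (φ - ψ) := by
  have h := norm_ofReal_mul_exp_add_sq a (-b) φ ψ
  rw [ofReal_neg, neg_mul, ← sub_eq_add_neg] at h
  linear_combination h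

lemma re_ofReal_mul_exp_add_mul_exp_neg (a b φ ψ θ : ℝ) :
    (((a : ℂ) * exp (φ * I) + b * exp (ψ * I)) * exp (-θ * I)).re
      = a * Real.cos (φ - θ) + b * Real.cos (ψ - θ) := by
  have hφ : exp (φ * I) * exp (-θ * I) = exp ((φ - θ : ℝ) * I) := by
    rw [← exp_add]; push_cast; ring_nf
  have hψ : exp (ψ * I) * exp (-θ * I) = exp ((ψ - θ : ℝ) * I) := by
    rw [← exp_add]; push_cast; ring_nf
  rw [add_mul, mul_assoc, mul_assoc, hφ, hψ, add_re, re_ofReal_mul, re_ofReal_mul,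
    exp_ofReal_mul_I_re, exp_ofReal_mul_I_re]

lemma re_mul_exp_neg_le_norm (z : ℂ) (θ : ℝ) : (z * exp (-θ * I)).re ≤ ‖z‖ := by
  calc (z * exp (-θ * I)).re ≤ ‖z * exp (-θ * I)‖ := re_le_norm _
    _ = ‖z‖ := by rw [norm_mul, ← ofReal_neg, norm_exp_ofReal_mul_I, mul_one]

lemma mul_exp_neg_arg (z : ℂ) : z * exp (-z.arg * I) = ‖z‖ := by
  nth_rw 1 [← norm_mul_exp_arg_mul_I z]
  rw [mul_assoc, ← exp_add, ← add_mul, add_neg_cancel, zero_mul, exp_zero, mul_one]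

lemma dist_ppt_gpt_sq (ρ₁ θ₁ ρ₂ θ₂ ρ θ : ℝ) :
    dist (ppt ρ₁ θ₁ ρ₂ θ₂) (gpt ρ θ) ^ 2
      = ρ₁ ^ 2 + ρ₂ ^ 2 + (ρ ^ 2 + ρ⁻¹ ^ 2) / 2
        - √2 * (ρ₁ * ρ * Real.cos (θ₁ - θ) + ρ₂ * ρ⁻¹ * Real.cos (θ₂ - θ)) := by
  rw [ppt, gpt, dist_pt_sq, norm_ofReal_mul_exp_sub_sq, norm_ofReal_mul_exp_sub_sq]
  linear_combination ((ρ ^ 2 + ρ⁻¹ ^ 2) / 4) * Real.sq_sqrt (zero_le_two : (0 : ℝ) ≤ 2)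

lemma sq_dist_ppt_diagonal_gpt_ge {ρ₁ θ₁ θ₂ ρ : ℝ} (hρ₁ : 0 ≤ ρ₁)
    (hnear : ρ₁ ≤ √(1 + Real.cos (θ₁ - θ₂))) (hρ : 0 < ρ) (θ : ℝ) :
    2 * ρ₁ ^ 2 - 2 * ρ₁ * √(1 + Real.cos (θ₁ - θ₂)) + 1
      ≤ dist (ppt ρ₁ θ₁ ρ₁ θ₂) (gpt ρ θ) ^ 2 := by
  set s := √(1 + Real.cos (θ₁ - θ₂))
  set w := ‖(ρ : ℂ) * exp (θ₁ * I) + (ρ⁻¹ : ℝ) * exp (θ₂ * I)‖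
  have hs : s ^ 2 = 1 + Real.cos (θ₁ - θ₂) :=
    Real.sq_sqrt (by linarith [Real.neg_one_le_cos (θ₁ - θ₂)])
  have hr : √2 ^ 2 = 2 := Real.sq_sqrt zero_le_two
  have hρρ : ρ * ρ⁻¹ = 1 := mul_inv_cancel₀ hρ.ne'
  have hw : w ^ 2 = ρ ^ 2 + ρ⁻¹ ^ 2 + 2 * Real.cos (θ₁ - θ₂) := by
    rw [norm_ofReal_mul_exp_add_sq, mul_assoc 2, hρρ, mul_one]
  have hre : ρ * Real.cos (θ₁ - θ) + ρ⁻¹ * Real.cos (θ₂ - θ) ≤ w :=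
    re_ofReal_mul_exp_add_mul_exp_neg ρ ρ⁻¹ θ₁ θ₂ θ ▸ re_mul_exp_neg_le_norm _ θ
  -- `ρ² + ρ⁻² ≥ 2` makes `w ≥ √2 s`, and then `w + √2 s ≥ 2√2 s ≥ 2√2 ρ₁`.
  have hsw : √2 * s ≤ w := by
    refine (pow_le_pow_iff_left₀ (by positivity) (norm_nonneg _) two_ne_zero).1 ?_
    rw [mul_pow, hr, hs, hw]
    nlinarith [sq_nonneg (ρ - ρ⁻¹)]
  have hfactor : 0 ≤ w ^ 2 - 2 * s ^ 2 - 2 * √2 * ρ₁ * w + 4 * ρ₁ * s := by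
    have h := mul_nonneg (sub_nonneg.2 hsw)
      (by nlinarith [Real.sqrt_nonneg 2] : 0 ≤ w + √2 * s - 2 * √2 * ρ₁)
    linear_combination h + (2 * ρ₁ * s - s ^ 2) * hr
  rw [dist_ppt_gpt_sq]
  nlinarith [mul_le_mul_of_nonneg_left hre (mul_nonneg (Real.sqrt_nonneg 2) hρ₁)]

lemma sq_dist_ppt_diagonal_gpt_one (ρ₁ θ₁ θ₂ : ℝ) :
    dist (ppt ρ₁ θ₁ ρ₁ θ₂) (gpt 1 (exp (θ₁ * I) + exp (θ₂ * I)).arg) ^ 2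
      = 2 * ρ₁ ^ 2 - 2 * ρ₁ * √(1 + Real.cos (θ₁ - θ₂)) + 1 := by
  set z := exp (θ₁ * I) + exp (θ₂ * I)
  have hcos : Real.cos (θ₁ - z.arg) + Real.cos (θ₂ - z.arg) = ‖z‖ := by
    have h := re_ofReal_mul_exp_add_mul_exp_neg 1 1 θ₁ θ₂ z.arg
    simp only [ofReal_one, one_mul] at h
    rw [← h, mul_exp_neg_arg, ofReal_re]
  have hz : ‖z‖ = √2 * √(1 + Real.cos (θ₁ - θ₂)) := by
    have h := norm_ofReal_mul_exp_add_sq 1 1 θ₁ θ₂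
    simp only [ofReal_one, one_mul, one_pow, mul_one] at h
    rw [← Real.sqrt_mul zero_le_two, ← Real.sqrt_sq (norm_nonneg z), h]
    ring_nf
  rw [dist_ppt_gpt_sq, inv_one, ← mul_add, mul_one, hcos, hz]
  linear_combination (-ρ₁ * √(1 + Real.cos (θ₁ - θ₂))) * Real.sq_sqrt (zero_le_two : (0 : ℝ) ≤ 2)

lemma infDist_eq_dist_of_forall_dist_le {α : Type*} [PseudoMetricSpace α] {x y : α}
    {s : Set α} (hy : y ∈ s) (h : ∀ z ∈ s, dist x y ≤ dist x z) : Metric.infDist x s = dist x y :=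
  le_antisymm (infDist_le_dist_of_mem hy) ((le_infDist ⟨y, hy⟩).2 h)

theorem sq_dist_diagonal_near (ρ₁ θ₁ θ₂ : ℝ) (h1 : 0 < ρ₁)
    (hnear : ρ₁ ≤ Real.sqrt (1 + Real.cos (θ₁ - θ₂))) :
    (Metric.infDist (ppt ρ₁ θ₁ ρ₁ θ₂) Gam) ^ 2
        = 2 * ρ₁ ^ 2 - 2 * ρ₁ * Real.sqrt (1 + Real.cos (θ₁ - θ₂)) + 1 ∧
    ∃ θs : ℝ, dist (ppt ρ₁ θ₁ ρ₁ θ₂) (gpt 1 θs)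
        = Metric.infDist (ppt ρ₁ θ₁ ρ₁ θ₂) Gam := by
  set θs := (exp (θ₁ * I) + exp (θ₂ * I)).arg
  have hmin : infDist (ppt ρ₁ θ₁ ρ₁ θ₂) Gam = dist (ppt ρ₁ θ₁ ρ₁ θ₂) (gpt 1 θs) := by
    refine infDist_eq_dist_of_forall_dist_le ⟨1, θs, one_pos, rfl⟩ ?_
    rintro _ ⟨ρ, θ, hρ, rfl⟩
    refine (pow_le_pow_iff_left₀ dist_nonneg dist_nonneg two_ne_zero).1 ?_
    rw [sq_dist_ppt_diagonal_gpt_one]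
    exact sq_dist_ppt_diagonal_gpt_ge h1.le hnear hρ θ
  exact ⟨by rw [hmin, sq_dist_ppt_diagonal_gpt_one], θs, hmin.symm⟩

end
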